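/- arXiv:2212.08714 — 2 statements merged into one kernel-verified Lean document; each statement's English description precedes it below -/
import Mathlib

section
/- For a measurable function f ∈ L¹(0, ∞) + L^∞(0, ∞) and t > 0, K(f, t; L¹, L^∞) = ∫₀^t μ_u(f) du, where μ(f) is the decreasing rearrangement of |f|. -/
open MeasureTheory Set ENNReal

/-- Lebesgue measure restricted to `(0, ∞)`. -/
noncomputable def mRes : Measure ℝ := volume.restrict (Set.Ioi 0)

/-- The decreasing rearrangement of `|f|` for a function `f` on `(0, ∞)`:
`μ_u(f) = inf { s > 0 : |{ |f| > s }| ≤ u }`. -/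
noncomputable def mu (f : ℝ → ℝ) (u : ℝ) : ℝ :=
  sInf {s : ℝ | 0 < s ∧ mRes {x | s < |f x|} ≤ ENNReal.ofReal u}

/-- The K-functional of the couple `(L^p(0,∞), L^q(0,∞))`:
`K(f, t) = inf { ‖g‖_p + t ‖h‖_q : f = g + h, g ∈ L^p, h ∈ L^q }`. -/
noncomputable def KLp (p q : ℝ≥0∞) (f : ℝ → ℝ) (t : ℝ) : ℝ :=
  sInf {r : ℝ | ∃ g h : ℝ → ℝ, f = g + h ∧ MemLp g p mRes ∧ MemLp h q mRes ∧
    r = (eLpNorm g p mRes).toReal + t * (eLpNorm h q mRes).toReal}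

/-!
Write `d_f(s) = |{|f| > s}|`. For `f ∈ L¹ + L^∞` we have `d_f(s) → 0`, and then
`μ_u(f) ≤ s ↔ d_f(s) ≤ u`, so `μ(f)` and `|f|` are equimeasurable and the layer-cake formula
gives `∫₀^∞ (μ(f) - σ)⁺ = ∫ (|f| - σ)⁺` for every `σ ≥ 0`.

Lower bound: if `f = g + h`, then `μ_u(f) ≤ μ_u(g) + ‖h‖_∞`, hence
`∫₀^t μ(f) ≤ ∫₀^∞ μ(g) + t ‖h‖_∞ = ‖g‖₁ + t ‖h‖_∞`.
Upper bound: cut `f` at height `σ = μ_t(f)`, i.e. let `h` be `f` clamped to `[-σ, σ]` and `g = f - h`.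
Then `‖h‖_∞ ≤ σ` and, since `μ(f) ≥ σ` on `(0, t]` and `μ(f) ≤ σ` beyond `t`,
`‖g‖₁ = ∫ (|f| - σ)⁺ = ∫₀^t (μ(f) - σ)`, so `‖g‖₁ + t ‖h‖_∞ ≤ ∫₀^t μ(f)`.
-/

open Filter Topology

namespace Rearrangement

theorem ae_abs_add_le_abs_add_lpNorm_top {α : Type*} [MeasurableSpace α] {μ : Measure α}
    {g h : α → ℝ} (hh : MemLp h ∞ μ) : ∀ᵐ x ∂μ, |(g + h) x| ≤ |g x| + lpNorm h ∞ μ :=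
  (ae_le_lpNorm_exponent_top hh).mono fun _ hx =>
    (abs_add_le _ _).trans (add_le_add_right hx _)

noncomputable def distribution (f : ℝ → ℝ) (s : ℝ) : ℝ≥0∞ := mRes {x | s < |f x|}

variable {f g : ℝ → ℝ}

theorem mu_nonneg (f : ℝ → ℝ) (u : ℝ) : 0 ≤ mu f u :=
  Real.sInf_nonneg fun _ hs => hs.1.le

theorem distribution_antitone (f : ℝ → ℝ) : Antitone (distribution f) :=
  fun _ _ h => measure_mono fun _ hx => h.trans_lt hx

theorem distribution_le_of_forall_gt {s : ℝ} {a : ℝ≥0∞}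
    (h : ∀ s' > s, distribution f s' ≤ a) :
    distribution f s ≤ a := by
  have hunion : {x | s < |f x|} = ⋃ n : ℕ, {x | s + 1 / (n + 1) < |f x|} := by
    ext x
    simp only [mem_ofPred_eq, mem_iUnion]
    refine ⟨fun hx => ?_, fun ⟨n, hn⟩ =>
      (lt_add_of_pos_right s Nat.one_div_pos_of_nat).trans hn⟩
    obtain ⟨n, hn⟩ := exists_nat_one_div_lt (sub_pos.2 hx)
    exact ⟨n, by linarith⟩
  have hmono : Monotone fun n : ℕ => {x | s + 1 / ((n : ℝ) + 1) < |f x|} :=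
    fun _ _ hmn _ hx => (add_le_add_right (Nat.one_div_le_one_div hmn) s).trans_lt hx
  rw [distribution, hunion, hmono.measure_iUnion]
  exact iSup_le fun _ => h _ (lt_add_of_pos_right s Nat.one_div_pos_of_nat)

theorem distribution_add_le_of_ae_abs_le_add {c : ℝ} (hfg : ∀ᵐ x ∂mRes, |f x| ≤ |g x| + c)
    (s : ℝ) :
    distribution f (s + c) ≤ distribution g s :=
  measure_mono_ae <| hfg.mono fun x hx (hs : s + c < |f x|) => (by linarith : s < |g x|)

theorem tendsto_distribution_of_memLp_one (hg : MemLp g 1 mRes) :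
    Tendsto (distribution g) atTop (𝓝 0) := by
  have hdiv : Tendsto (fun s : ℝ => eLpNorm g 1 mRes / ENNReal.ofReal s) atTop (𝓝 0) := by
    simpa using ENNReal.Tendsto.const_div ENNReal.tendsto_ofReal_atTop (Or.inr hg.2.ne)
  refine tendsto_of_tendsto_of_tendsto_of_le_of_le' tendsto_const_nhds hdiv
    (.of_forall fun _ => zero_le) ?_
  filter_upwards [eventually_gt_atTop 0] with s hs
  rw [eLpNorm_one_eq_lintegral_enorm]
  refine (measure_mono fun x (hx : s < |g x|) => ?_).trans
    (meas_ge_le_lintegral_div hg.1.enorm (by simpa using hs) ofReal_ne_top)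
  simpa [Real.enorm_eq_ofReal_abs] using ENNReal.ofReal_le_ofReal hx.le

theorem tendsto_distribution_of_ae_abs_le_add {c : ℝ}
    (hg : Tendsto (distribution g) atTop (𝓝 0))
    (hfg : ∀ᵐ x ∂mRes, |f x| ≤ |g x| + c) : Tendsto (distribution f) atTop (𝓝 0) := by
  refine tendsto_of_tendsto_of_tendsto_of_le_of_le tendsto_const_nhds
    (hg.comp (tendsto_atTop_add_const_right _ (-c) tendsto_id)) (fun _ => zero_le) fun s => ?_
  simpa using distribution_add_le_of_ae_abs_le_add hfg (s + -c)

theorem exists_distribution_le (hf : Tendsto (distribution f) atTop (𝓝 0)) {u : ℝ}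
    (hu : 0 < u) :
    ∃ s, 0 < s ∧ distribution f s ≤ ENNReal.ofReal u := by
  obtain ⟨s, hlt, hs⟩ :=
    (((tendsto_order.1 hf).2 _ (ofReal_pos.2 hu)).and (eventually_gt_atTop 0)).exists
  exact ⟨s, hs, hlt.le⟩

theorem mu_le_iff (hf : Tendsto (distribution f) atTop (𝓝 0)) {u s : ℝ} (hu : 0 < u)
    (hs : 0 ≤ s) :
    mu f u ≤ s ↔ distribution f s ≤ ENNReal.ofReal u := by
  have hbdd : BddBelow {σ : ℝ | 0 < σ ∧ distribution f σ ≤ ENNReal.ofReal u} :=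
    ⟨0, fun _ h => h.1.le⟩
  refine ⟨fun h => distribution_le_of_forall_gt fun s' hs' => ?_, fun h => ?_⟩
  · obtain ⟨σ, hσ, hσs'⟩ :=
      exists_lt_of_csInf_lt (exists_distribution_le hf hu) (h.trans_lt hs')
    exact (distribution_antitone f hσs'.le).trans hσ.2
  · refine le_of_forall_pos_le_add fun ε hε => csInf_le hbdd ⟨by positivity, ?_⟩
    exact (distribution_antitone f (by linarith)).trans h

theorem distribution_mu_le (hf : Tendsto (distribution f) atTop (𝓝 0)) {u : ℝ} (hu : 0 < u) :
    distribution f (mu f u) ≤ ENNReal.ofReal u :=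
  (mu_le_iff hf hu (mu_nonneg f u)).1 le_rfl

theorem mu_antitoneOn (hf : Tendsto (distribution f) atTop (𝓝 0)) : AntitoneOn (mu f) (Ioi 0) :=
  fun u hu _ hv huv => (mu_le_iff hf hv (mu_nonneg f u)).2 <|
    (distribution_mu_le hf hu).trans (ofReal_le_ofReal huv)

theorem mu_le_mu_add (hg : Tendsto (distribution g) atTop (𝓝 0)) {c : ℝ} (hc : 0 ≤ c)
    (hfg : ∀ᵐ x ∂mRes, |f x| ≤ |g x| + c) {u : ℝ} (hu : 0 < u) : mu f u ≤ mu g u + c :=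
  (mu_le_iff (tendsto_distribution_of_ae_abs_le_add hg hfg) hu
      (by linarith [mu_nonneg g u])).2 <|
    (distribution_add_le_of_ae_abs_le_add hfg _).trans (distribution_mu_le hg hu)

theorem volume_Ioi_inter_ofReal_lt (d : ℝ≥0∞) :
    volume (Ioi 0 ∩ {u : ℝ | ENNReal.ofReal u < d}) = d := by
  rcases eq_or_ne d ⊤ with rfl | hd
  · simp
  · have : Ioi 0 ∩ {u : ℝ | ENNReal.ofReal u < d} = Ioo 0 d.toReal := by
      ext u
      simp only [mem_inter_iff, mem_Ioi, mem_ofPred_eq, mem_Ioo, and_congr_right_iff]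
      exact fun hu => ofReal_lt_iff_lt_toReal hu.le hd
    simp [this, hd]

theorem volume_lt_mu_eq_distribution (hf : Tendsto (distribution f) atTop (𝓝 0)) {s : ℝ}
    (hs : 0 ≤ s) :
    volume.restrict (Ioi 0) {u : ℝ | s < mu f u} = distribution f s := by
  rw [Measure.restrict_apply' measurableSet_Ioi, inter_comm,
    ← volume_Ioi_inter_ofReal_lt (distribution f s)]
  congr 1
  ext u
  simp only [mem_inter_iff, mem_Ioi, mem_ofPred_eq, and_congr_right_iff]
  exact fun hu => by rw [← not_le, ← not_le, mu_le_iff hf hu hs]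

theorem lintegral_ofReal_max_sub_eq_of_meas_lt_eq {α β : Type*} [MeasurableSpace α]
    [MeasurableSpace β] {μ : Measure α} {ν : Measure β} {F : α → ℝ} {G : β → ℝ}
    (hF : AEMeasurable F μ)
    (hG : AEMeasurable G ν) {σ : ℝ} (h : ∀ s > σ, μ {x | s < F x} = ν {y | s < G y}) :
    ∫⁻ x, ENNReal.ofReal (max (F x - σ) 0) ∂μ = ∫⁻ y, ENNReal.ofReal (max (G y - σ) 0) ∂ν := by
  have hlevel : ∀ s > 0, ∀ a : ℝ, s < max (a - σ) 0 ↔ s + σ < a := fun s hs a => by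
    rw [lt_max_iff, or_iff_left hs.not_gt]
    constructor <;> intro <;> linarith
  rw [lintegral_eq_lintegral_meas_lt μ (f := fun x => max (F x - σ) 0)
      (.of_forall fun _ => le_max_right _ _) ((hF.sub_const σ).max aemeasurable_const),
    lintegral_eq_lintegral_meas_lt ν (f := fun y => max (G y - σ) 0)
      (.of_forall fun _ => le_max_right _ _) ((hG.sub_const σ).max aemeasurable_const)]
  refine setLIntegral_congr_fun measurableSet_Ioi fun s (hs : 0 < s) => ?_
  simp only [hlevel s hs]
  exact h _ (by linarith)

theorem lintegral_Ioi_max_mu_sub_eq (hf : Tendsto (distribution f) atTop (𝓝 0))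
    (hfm : AEMeasurable f mRes) {σ : ℝ} (hσ : 0 ≤ σ) :
    ∫⁻ u in Ioi 0, ENNReal.ofReal (max (mu f u - σ) 0) =
      ∫⁻ x, ENNReal.ofReal (max (|f x| - σ) 0) ∂mRes :=
  lintegral_ofReal_max_sub_eq_of_meas_lt_eq
    (aemeasurable_restrict_of_antitoneOn measurableSet_Ioi (mu_antitoneOn hf)) hfm.abs
    fun _ hs => volume_lt_mu_eq_distribution hf (hσ.trans hs.le)

theorem lintegral_Ioi_mu_eq_eLpNorm_one (hf : Tendsto (distribution f) atTop (𝓝 0))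
    (hfm : AEMeasurable f mRes) :
    ∫⁻ u in Ioi 0, ENNReal.ofReal (mu f u) = eLpNorm f 1 mRes := by
  simpa [max_eq_left (mu_nonneg f _), eLpNorm_one_eq_lintegral_enorm,
    Real.enorm_eq_ofReal_abs] using lintegral_Ioi_max_mu_sub_eq hf hfm le_rfl

theorem lintegral_Ioc_mu_add_le {h : ℝ → ℝ} (hg : MemLp g 1 mRes) (hh : MemLp h ∞ mRes)
    (t : ℝ) :
    ∫⁻ u in Ioc 0 t, ENNReal.ofReal (mu (g + h) u) ≤
      eLpNorm g 1 mRes + ENNReal.ofReal t * eLpNorm h ∞ mRes := by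
  have hc : ENNReal.ofReal (lpNorm h ∞ mRes) = eLpNorm h ∞ mRes := by
    rw [← toReal_eLpNorm hh.1, ofReal_toReal hh.2.ne]
  have hgd := tendsto_distribution_of_memLp_one hg
  calc ∫⁻ u in Ioc 0 t, ENNReal.ofReal (mu (g + h) u)
      ≤ ∫⁻ u in Ioc 0 t, (ENNReal.ofReal (mu g u) + eLpNorm h ∞ mRes) := by
        refine setLIntegral_mono' measurableSet_Ioc fun u hu => ?_
        rw [← hc]
        exact (ofReal_le_ofReal (mu_le_mu_add hgd lpNorm_nonneg
          (ae_abs_add_le_abs_add_lpNorm_top hh) hu.1)).trans ofReal_add_le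
    _ = (∫⁻ u in Ioc 0 t, ENNReal.ofReal (mu g u)) + ENNReal.ofReal t * eLpNorm h ∞ mRes := by
        rw [lintegral_add_right _ measurable_const, setLIntegral_const, Real.volume_Ioc,
          sub_zero, mul_comm]
    _ ≤ (∫⁻ u in Ioi 0, ENNReal.ofReal (mu g u)) + ENNReal.ofReal t * eLpNorm h ∞ mRes := by
        gcongr ?_ + _
        exact lintegral_mono_set Ioc_subset_Ioi_self
    _ = eLpNorm g 1 mRes + ENNReal.ofReal t * eLpNorm h ∞ mRes := by
        rw [lintegral_Ioi_mu_eq_eLpNorm_one hgd hg.1.aemeasurable]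

theorem lintegral_Ioc_mu_eq (hf : Tendsto (distribution f) atTop (𝓝 0))
    (hfm : AEMeasurable f mRes) {t : ℝ} (ht : 0 < t) :
    ∫⁻ u in Ioc 0 t, ENNReal.ofReal (mu f u) =
      ∫⁻ x, ENNReal.ofReal (max (|f x| - mu f t) 0) ∂mRes +
        ENNReal.ofReal t * ENNReal.ofReal (mu f t) := by
  set σ := mu f t
  have hvanish : ∫⁻ u in Ioi t, ENNReal.ofReal (max (mu f u - σ) 0) = 0 := by
    refine setLIntegral_eq_zero measurableSet_Ioi fun u (hu : t < u) => ?_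
    have : mu f u ≤ σ := mu_antitoneOn hf ht (ht.trans hu) hu.le
    simp [this]
  have hIoc : ∀ u ∈ Ioc 0 t,
      ENNReal.ofReal (mu f u) = ENNReal.ofReal (max (mu f u - σ) 0) + ENNReal.ofReal σ :=
    fun u hu => by
      have : σ ≤ mu f u := mu_antitoneOn hf hu.1 ht hu.2
      rw [max_eq_left (by linarith), ← ofReal_add (by linarith) (mu_nonneg f t), sub_add_cancel]
  rw [← lintegral_Ioi_max_mu_sub_eq hf hfm (mu_nonneg f t), ← Ioc_union_Ioi_eq_Ioi ht.le,
    lintegral_union measurableSet_Ioi (Ioc_disjoint_Ioi le_rfl), hvanish, add_zero,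
    setLIntegral_congr_fun measurableSet_Ioc hIoc, lintegral_add_right _ measurable_const,
    setLIntegral_const, Real.volume_Ioc, sub_zero, mul_comm]

theorem abs_sub_max_neg_min {σ : ℝ} (hσ : 0 ≤ σ) (x : ℝ) :
    |x - max (-σ) (min σ x)| = max (|x| - σ) 0 := by
  grind

theorem exists_eq_add_le_lintegral_mu (hf : Tendsto (distribution f) atTop (𝓝 0))
    (hfm : AEStronglyMeasurable f mRes) {t : ℝ} (ht : 0 < t)
    (hfin : ∫⁻ u in Ioc 0 t, ENNReal.ofReal (mu f u) ≠ ⊤) :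
    ∃ g h : ℝ → ℝ, f = g + h ∧ MemLp g 1 mRes ∧ MemLp h ∞ mRes ∧
      eLpNorm g 1 mRes + ENNReal.ofReal t * eLpNorm h ∞ mRes ≤
        ∫⁻ u in Ioc 0 t, ENNReal.ofReal (mu f u) := by
  set σ := mu f t
  have hσ : 0 ≤ σ := mu_nonneg f t
  set h : ℝ → ℝ := fun x => max (-σ) (min σ (f x))
  have hhm : AEStronglyMeasurable h mRes :=
    (continuous_const.max (continuous_const.min continuous_id)).comp_aestronglyMeasurable hfm
  have hh_le : ∀ᵐ x ∂mRes, ‖h x‖ ≤ σ := .of_forall fun _ =>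
    abs_le.2 ⟨le_max_left _ _, max_le (by linarith) (min_le_left _ _)⟩
  have hg : eLpNorm (f - h) 1 mRes = ∫⁻ x, ENNReal.ofReal (max (|f x| - σ) 0) ∂mRes := by
    simp only [eLpNorm_one_eq_lintegral_enorm, Real.enorm_eq_ofReal_abs, Pi.sub_apply, h,
      abs_sub_max_neg_min hσ]
  have hval : eLpNorm (f - h) 1 mRes + ENNReal.ofReal t * eLpNorm h ∞ mRes ≤
      ∫⁻ u in Ioc 0 t, ENNReal.ofReal (mu f u) := by
    rw [lintegral_Ioc_mu_eq hf hfm.aemeasurable ht, hg, eLpNorm_exponent_top]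
    gcongr
    exact eLpNormEssSup_le_of_ae_bound hh_le
  have hg_fin : eLpNorm (f - h) 1 mRes < ⊤ := (le_self_add.trans hval).trans_lt hfin.lt_top
  exact ⟨f - h, h, (sub_add_cancel f h).symm, ⟨hfm.sub hhm, hg_fin⟩,
    memLp_top_of_bound hhm σ hh_le, hval⟩

theorem KLp_eq_toReal {p q : ℝ≥0∞} {f : ℝ → ℝ} {t : ℝ} {a : ℝ≥0∞} (ht : 0 ≤ t)
    (hle : ∀ g h : ℝ → ℝ, f = g + h → MemLp g p mRes → MemLp h q mRes →
      a ≤ eLpNorm g p mRes + ENNReal.ofReal t * eLpNorm h q mRes)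
    (hge : ∃ g h : ℝ → ℝ, f = g + h ∧ MemLp g p mRes ∧ MemLp h q mRes ∧
      eLpNorm g p mRes + ENNReal.ofReal t * eLpNorm h q mRes ≤ a) :
    KLp p q f t = a.toReal := by
  have hval : ∀ g h : ℝ → ℝ, MemLp g p mRes → MemLp h q mRes →
      (eLpNorm g p mRes).toReal + t * (eLpNorm h q mRes).toReal =
        (eLpNorm g p mRes + ENNReal.ofReal t * eLpNorm h q mRes).toReal := fun g h hg hh => by
    rw [toReal_add hg.2.ne (mul_ne_top ofReal_ne_top hh.2.ne), toReal_mul, toReal_ofReal ht]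
  obtain ⟨g₀, h₀, hfgh₀, hg₀, hh₀, ha₀⟩ := hge
  have ha : a = eLpNorm g₀ p mRes + ENNReal.ofReal t * eLpNorm h₀ q mRes :=
    (hle g₀ h₀ hfgh₀ hg₀ hh₀).antisymm ha₀
  refine le_antisymm ?_ (le_csInf ⟨_, g₀, h₀, hfgh₀, hg₀, hh₀, rfl⟩ ?_)
  · rw [ha, ← hval _ _ hg₀ hh₀]
    refine csInf_le ⟨0, ?_⟩ ⟨g₀, h₀, hfgh₀, hg₀, hh₀, rfl⟩
    rintro r ⟨g, h, -, -, -, rfl⟩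
    positivity
  · rintro r ⟨g, h, hfgh, hg, hh, rfl⟩
    rw [hval g h hg hh]
    exact toReal_mono (add_ne_top.2 ⟨hg.2.ne, mul_ne_top ofReal_ne_top hh.2.ne⟩)
      (hle g h hfgh hg hh)

end Rearrangement

open Rearrangement

theorem K_L1_Linfty_eq_integral_rearrangement_general
    (f : ℝ → ℝ)
    (hsum : ∃ g h : ℝ → ℝ, f = g + h ∧ MemLp g 1 mRes ∧ MemLp h ∞ mRes)
    (t : ℝ) (ht : 0 < t) :
    KLp 1 ∞ f t = ∫ u in Set.Ioc (0 : ℝ) t, mu f u := by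
  obtain ⟨g, h, rfl, hg, hh⟩ := hsum
  have hd : Tendsto (distribution (g + h)) atTop (𝓝 0) :=
    tendsto_distribution_of_ae_abs_le_add (tendsto_distribution_of_memLp_one hg)
      (ae_abs_add_le_abs_add_lpNorm_top hh)
  have hfin : ∫⁻ u in Ioc 0 t, ENNReal.ofReal (mu (g + h) u) ≠ ⊤ :=
    ((lintegral_Ioc_mu_add_le hg hh t).trans_lt
      (add_lt_top.2 ⟨hg.2, mul_lt_top ofReal_lt_top hh.2⟩)).ne
  have hμm : AEStronglyMeasurable (mu (g + h)) (volume.restrict (Ioc 0 t)) :=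
    (aemeasurable_restrict_of_antitoneOn measurableSet_Ioc
      ((mu_antitoneOn hd).mono Ioc_subset_Ioi_self)).aestronglyMeasurable
  rw [integral_eq_lintegral_of_nonneg_ae (.of_forall (mu_nonneg _)) hμm]
  exact KLp_eq_toReal ht.le
    (fun g' h' hfgh hg' hh' => hfgh ▸ lintegral_Ioc_mu_add_le hg' hh' t)
    (exists_eq_add_le_lintegral_mu hd (hg.1.add hh.1) ht hfin)

/-- For `f ∈ L¹ + L^∞` on `(0, ∞)` and `t > 0`,
`K(f, t; L¹, L^∞) = ∫₀^t μ_u(f) du`. -/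
theorem K_L1_Linfty_eq_integral_rearrangement
    (f : ℝ → ℝ) (hf : Measurable f)
    (hsum : ∃ g h : ℝ → ℝ, f = g + h ∧ MemLp g 1 mRes ∧ MemLp h ∞ mRes)
    (t : ℝ) (ht : 0 < t) :
    KLp 1 ∞ f t = ∫ u in Set.Ioc (0 : ℝ) t, mu f u :=
  K_L1_Linfty_eq_integral_rearrangement_general f hsum t ht
end

section
/- If T : L¹ + L^∞ → L¹ + L^∞ is linear with ‖T : L¹ → L¹‖ ≤ 1 and ‖T : L^∞ → L^∞‖ ≤ 1, then for every f ∈ L¹ + L^∞, Tf is submajorized by f: for all t > 0, ∫₀^t μ_s(Tf) ds ≤ ∫₀^t μ_s(f) ds. -/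
/-!
Split `f` at the level `c = μ_t(f)` as `f = (f - f_c) + f_c`, where `f_c` is `f` truncated to
`[-c, c]`. Since `μ(f)` and `|f|` are equimeasurable, the layer-cake formula gives
`‖f - f_c‖₁ + c t = ∫ (|f| - c)₊ + c t = ∫₀^t μ(f)`. Conversely, any splitting `F = G + H` with
`|H| ≤ c` has `μ_u(F) ≤ μ_u(G) + c`, hence `∫₀^t μ(F) ≤ ‖G‖₁ + c t`. Applied to
`Tf = T(f - f_c) + T f_c`, the two contractivity hypotheses give
`∫₀^t μ(Tf) ≤ ‖f - f_c‖₁ + c t = ∫₀^t μ(f)`.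
-/

open MeasureTheory Set ENNReal

section Truncation

variable {α : Type*}

def truncate (c : ℝ) (f : α → ℝ) (x : α) : ℝ := max (min (f x) c) (-c)

lemma abs_truncate_le {c : ℝ} (hc : 0 ≤ c) (f : α → ℝ) (x : α) : |truncate c f x| ≤ c :=
  abs_le.mpr ⟨le_max_right _ _, max_le (min_le_right _ _) (by linarith)⟩

variable [MeasurableSpace α] {μ : Measure α}

lemma ae_abs_le_of_eLpNorm_top_le {h : α → ℝ} {c : ℝ} (hc : 0 ≤ c)
    (hh : eLpNorm h ∞ μ ≤ ENNReal.ofReal c) : ∀ᵐ x ∂μ, |h x| ≤ c := by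
  rw [eLpNorm_exponent_top] at hh
  filter_upwards [ae_le_eLpNormEssSup (f := h) (μ := μ)] with x hx
  rw [← ENNReal.ofReal_le_ofReal_iff hc, ← Real.enorm_eq_ofReal_abs]
  exact hx.trans hh

lemma exists_ae_abs_le_of_memLp_top {h : α → ℝ} (hh : MemLp h ∞ μ) :
    ∃ c, 0 ≤ c ∧ ∀ᵐ x ∂μ, |h x| ≤ c :=
  ⟨_, toReal_nonneg, ae_abs_le_of_eLpNorm_top_le toReal_nonneg (ofReal_toReal hh.2.ne).ge⟩

lemma AEMeasurable.truncate {f : α → ℝ} (hf : AEMeasurable f μ) (c : ℝ) :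
    AEMeasurable (truncate c f) μ :=
  (hf.min aemeasurable_const).max aemeasurable_const

lemma memLp_top_truncate {f : α → ℝ} (hf : AEMeasurable f μ) {c : ℝ} (hc : 0 ≤ c) :
    MemLp (truncate c f) ∞ μ :=
  memLp_top_of_bound (hf.truncate c).aestronglyMeasurable c (.of_forall (abs_truncate_le hc f))

lemma eLpNorm_top_truncate_le {c : ℝ} (hc : 0 ≤ c) (f : α → ℝ) :
    eLpNorm (truncate c f) ∞ μ ≤ ENNReal.ofReal c := by
  rw [eLpNorm_exponent_top]
  exact eLpNormEssSup_le_of_ae_bound (.of_forall (abs_truncate_le hc f))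

lemma eLpNorm_sub_truncate_le {c : ℝ} (hc : 0 ≤ c) (f : α → ℝ) :
    eLpNorm (f - truncate c f) 1 μ ≤ ∫⁻ x, ENNReal.ofReal (|f x| - c) ∂μ := by
  rw [eLpNorm_one_eq_lintegral_enorm]
  refine lintegral_mono fun x ↦ ?_
  rw [Pi.sub_apply, Real.enorm_eq_ofReal_abs, ENNReal.ofReal_le_ofReal_iff', truncate]
  grind

end Truncation

namespace Submajorization

noncomputable def distrib (f : ℝ → ℝ) (s : ℝ) : ℝ≥0∞ := mRes {x | s < |f x|}

/-- The infimum defining `mu f u` is over a nonempty set for every `u > 0`, i.e. `μ_u(f) < ∞`;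
otherwise `mu f u = sInf ∅ = 0` is a junk value. -/
def RearrangementFinite (f : ℝ → ℝ) : Prop :=
  ∀ u : ℝ, 0 < u → ∃ s, 0 < s ∧ distrib f s ≤ ENNReal.ofReal u

lemma distrib_antitone (f : ℝ → ℝ) : Antitone (distrib f) :=
  fun _ _ hss' ↦ measure_mono fun _ hx ↦ lt_of_le_of_lt hss' hx

lemma distrib_le_of_forall_gt {f : ℝ → ℝ} {s : ℝ} {a : ℝ≥0∞}
    (h : ∀ s', s < s' → distrib f s' ≤ a) : distrib f s ≤ a := by
  have hunion : {x | s < |f x|} = ⋃ n : ℕ, {x | s + 1 / (n + 1) < |f x|} := by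
    ext x
    simp only [mem_ofPred_eq, mem_iUnion]
    refine ⟨fun hx ↦ ?_, fun ⟨n, hn⟩ ↦ lt_trans (lt_add_of_pos_right s (by positivity)) hn⟩
    obtain ⟨n, hn⟩ := exists_nat_one_div_lt (sub_pos.mpr hx)
    exact ⟨n, by linarith⟩
  have hmono : Monotone fun n : ℕ ↦ {x | s + 1 / ((n : ℝ) + 1) < |f x|} :=
    fun m n hmn x (hx : s + 1 / ((m : ℝ) + 1) < |f x|) ↦
      show s + 1 / ((n : ℝ) + 1) < |f x| from lt_of_le_of_lt (by gcongr) hx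
  rw [distrib, hunion, hmono.measure_iUnion]
  exact iSup_le fun n ↦ h _ (lt_add_of_pos_right s (by positivity))

lemma mu_nonneg (f : ℝ → ℝ) (u : ℝ) : 0 ≤ mu f u :=
  Real.sInf_nonneg fun _ hs ↦ hs.1.le

lemma mu_le_iff {f : ℝ → ℝ} (hf : RearrangementFinite f) {u s : ℝ} (hu : 0 < u) (hs : 0 < s) :
    mu f u ≤ s ↔ distrib f s ≤ ENNReal.ofReal u := by
  refine ⟨fun hmu ↦ distrib_le_of_forall_gt fun s' hs' ↦ ?_,
    fun hd ↦ csInf_le ⟨0, fun _ hr ↦ hr.1.le⟩ ⟨hs, hd⟩⟩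
  obtain ⟨r, ⟨-, hr⟩, hrs'⟩ := exists_lt_of_csInf_lt (hf u hu) (hmu.trans_lt hs')
  exact (distrib_antitone f hrs'.le).trans hr

lemma mu_antitoneOn {f : ℝ → ℝ} (hf : RearrangementFinite f) : AntitoneOn (mu f) (Ioi 0) :=
  fun _ hu _ _ huu' ↦ csInf_le_csInf ⟨0, fun _ hr ↦ hr.1.le⟩ (hf _ hu)
    fun _ hr ↦ ⟨hr.1, hr.2.trans (ENNReal.ofReal_le_ofReal huu')⟩

lemma aemeasurable_mu {f : ℝ → ℝ} (hf : RearrangementFinite f) : AEMeasurable (mu f) mRes :=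
  aemeasurable_restrict_of_antitoneOn measurableSet_Ioi (mu_antitoneOn hf)

lemma mRes_setOf_ofReal_lt (a : ℝ≥0∞) : mRes {u | ENNReal.ofReal u < a} = a := by
  rw [mRes, Measure.restrict_apply' measurableSet_Ioi]
  rcases eq_top_or_lt_top a with rfl | ha
  · simp
  · have : {u | ENNReal.ofReal u < a} ∩ Ioi 0 = Ioo 0 a.toReal := by
      ext u
      simp only [mem_inter_iff, mem_ofPred_eq, mem_Ioi, mem_Ioo]
      refine ⟨fun ⟨h, hu⟩ ↦ ⟨hu, ?_⟩, fun ⟨hu, h⟩ ↦ ⟨?_, hu⟩⟩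
      · exact (ENNReal.ofReal_lt_iff_lt_toReal hu.le ha.ne).mp h
      · exact (ENNReal.ofReal_lt_iff_lt_toReal hu.le ha.ne).mpr h
    rw [this, Real.volume_Ioo, sub_zero, ENNReal.ofReal_toReal ha.ne]

lemma distrib_mu {f : ℝ → ℝ} (hf : RearrangementFinite f) {s : ℝ} (hs : 0 < s) :
    distrib (mu f) s = distrib f s := by
  have : {u | s < |mu f u|} ∩ Ioi 0 = {u | ENNReal.ofReal u < distrib f s} ∩ Ioi 0 := by
    ext u
    simp only [mem_inter_iff, mem_ofPred_eq, mem_Ioi, abs_of_nonneg (mu_nonneg f u)]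
    refine and_congr_left fun hu ↦ ?_
    rw [← not_le, mu_le_iff hf hu hs, not_le]
  rw [distrib, ← mRes_setOf_ofReal_lt (distrib f s), mRes,
    Measure.restrict_apply' measurableSet_Ioi, Measure.restrict_apply' measurableSet_Ioi, this]

lemma lintegral_ofReal_abs_sub {f : ℝ → ℝ} (hf : AEMeasurable f mRes) (c : ℝ) :
    ∫⁻ x, ENNReal.ofReal (|f x| - c) ∂mRes = ∫⁻ s in Ioi 0, distrib f (s + c) := by
  have hpos : ∀ x, ENNReal.ofReal (|f x| - c) = ENNReal.ofReal (max (|f x| - c) 0) := fun x ↦ by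
    rcases le_total (|f x| - c) 0 with h | h <;> simp [h, ENNReal.ofReal_of_nonpos]
  simp_rw [hpos]
  rw [lintegral_eq_lintegral_meas_lt mRes (f := fun x ↦ max (|f x| - c) 0)
    (.of_forall fun _ ↦ le_max_right _ _) (by fun_prop)]
  refine setLIntegral_congr_fun measurableSet_Ioi fun s (hs : 0 < s) ↦ congrArg mRes ?_
  ext x
  simp only [mem_ofPred_eq, lt_max_iff, hs.not_gt, or_false]
  constructor <;> intro h <;> linarith

lemma lintegral_ofReal_mu_sub {f : ℝ → ℝ} (hf : RearrangementFinite f) (hmf : AEMeasurable f mRes)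
    {c : ℝ} (hc : 0 ≤ c) :
    ∫⁻ u, ENNReal.ofReal (mu f u - c) ∂mRes = ∫⁻ x, ENNReal.ofReal (|f x| - c) ∂mRes := by
  have h := lintegral_ofReal_abs_sub (aemeasurable_mu hf) c
  simp only [abs_of_nonneg (mu_nonneg f _)] at h
  rw [h, lintegral_ofReal_abs_sub hmf c]
  exact setLIntegral_congr_fun measurableSet_Ioi fun s (hs : 0 < s) ↦ distrib_mu hf (by positivity)

lemma distrib_add_le {g h : ℝ → ℝ} {c : ℝ} (hh : ∀ᵐ x ∂mRes, |h x| ≤ c) (s : ℝ) :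
    distrib (g + h) (s + c) ≤ distrib g s := by
  refine measure_mono_ae ?_
  filter_upwards [hh] with x hx (hgt : s + c < |g x + h x|)
  show s < |g x|
  linarith [abs_add_le (g x) (h x)]

lemma RearrangementFinite.add {g h : ℝ → ℝ} {c : ℝ} (hg : RearrangementFinite g) (hc : 0 ≤ c)
    (hh : ∀ᵐ x ∂mRes, |h x| ≤ c) : RearrangementFinite (g + h) := fun u hu ↦
  let ⟨s, hs, hd⟩ := hg u hu
  ⟨s + c, by positivity, (distrib_add_le hh s).trans hd⟩

lemma mu_add_le {g h : ℝ → ℝ} {c u : ℝ} (hg : RearrangementFinite g) (hc : 0 ≤ c)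
    (hh : ∀ᵐ x ∂mRes, |h x| ≤ c) (hu : 0 < u) : mu (g + h) u ≤ mu g u + c := by
  rw [← sub_le_iff_le_add]
  refine le_csInf (hg u hu) fun s ⟨hs, hd⟩ ↦ sub_le_iff_le_add.mpr ?_
  exact csInf_le ⟨0, fun _ hr ↦ hr.1.le⟩ ⟨by positivity, (distrib_add_le hh s).trans hd⟩

lemma rearrangementFinite_of_memLp_one {g : ℝ → ℝ} (hg : MemLp g 1 mRes) :
    RearrangementFinite g := by
  intro u hu
  set N := eLpNorm g 1 mRes
  set s := N.toReal / u + 1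
  have hs : 0 < s := by positivity
  have hmarkov : ENNReal.ofReal s * distrib g s ≤ N := by
    have := mul_meas_ge_le_pow_eLpNorm' mRes one_ne_zero one_ne_top hg.1 (ENNReal.ofReal s)
    simp only [toReal_one, rpow_one] at this
    refine le_trans (mul_le_mul_right (measure_mono fun x (hx : s < |g x|) ↦ ?_) _) this
    simpa [Real.enorm_eq_ofReal_abs] using ENNReal.ofReal_le_ofReal hx.le
  have hN : N ≤ ENNReal.ofReal s * ENNReal.ofReal u := by
    rw [← ENNReal.ofReal_mul hs.le, ENNReal.le_ofReal_iff_toReal_le hg.2.ne (by positivity),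
      add_mul, div_mul_cancel₀ _ hu.ne']
    linarith
  exact ⟨s, hs, (ENNReal.mul_le_mul_iff_right (by simpa using hs) ofReal_ne_top).mp
    (hmarkov.trans hN)⟩

lemma lintegral_Ioc_mu_add_le {g h : ℝ → ℝ} {c : ℝ} (hg : MemLp g 1 mRes) (hc : 0 ≤ c)
    (hh : ∀ᵐ x ∂mRes, |h x| ≤ c) (t : ℝ) :
    ∫⁻ u in Ioc 0 t, ENNReal.ofReal (mu (g + h) u) ≤
      eLpNorm g 1 mRes + ENNReal.ofReal c * ENNReal.ofReal t := by
  have hgf := rearrangementFinite_of_memLp_one hg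
  have hL1 : ∫⁻ u, ENNReal.ofReal (mu g u) ∂mRes = eLpNorm g 1 mRes := by
    simpa [eLpNorm_one_eq_lintegral_enorm, Real.enorm_eq_ofReal_abs] using
      lintegral_ofReal_mu_sub hgf hg.1.aemeasurable le_rfl
  calc ∫⁻ u in Ioc 0 t, ENNReal.ofReal (mu (g + h) u)
      ≤ ∫⁻ u in Ioc 0 t, (ENNReal.ofReal (mu g u) + ENNReal.ofReal c) :=
        setLIntegral_mono' measurableSet_Ioc fun u hu ↦
          (ENNReal.ofReal_le_ofReal (mu_add_le hgf hc hh hu.1)).trans ENNReal.ofReal_add_le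
    _ = (∫⁻ u in Ioc 0 t, ENNReal.ofReal (mu g u)) + ENNReal.ofReal c * ENNReal.ofReal t := by
        rw [lintegral_add_right _ measurable_const, setLIntegral_const, Real.volume_Ioc, sub_zero]
    _ ≤ eLpNorm g 1 mRes + ENNReal.ofReal c * ENNReal.ofReal t := by
        rw [← hL1]
        gcongr
        exact Measure.restrict_mono Ioc_subset_Ioi_self le_rfl

lemma lintegral_Ioc_mu_eq {f : ℝ → ℝ} (hf : RearrangementFinite f) (hmf : AEMeasurable f mRes)
    {t : ℝ} (ht : 0 < t) :
    ∫⁻ u in Ioc 0 t, ENNReal.ofReal (mu f u) =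
      ∫⁻ x, ENNReal.ofReal (|f x| - mu f t) ∂mRes + ENNReal.ofReal (mu f t) * ENNReal.ofReal t := by
  set c := mu f t
  have hbelow : ∀ u ∈ Ioc 0 t, c ≤ mu f u := fun u hu ↦ mu_antitoneOn hf hu.1 ht hu.2
  have htail : ∫⁻ u in Ioi t, ENNReal.ofReal (mu f u - c) = 0 :=
    (setLIntegral_congr_fun measurableSet_Ioi fun u (hu : t < u) ↦ ENNReal.ofReal_eq_zero.mpr
      (sub_nonpos.mpr (mu_antitoneOn hf ht (ht.trans hu) hu.le))).trans lintegral_zero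
  calc ∫⁻ u in Ioc 0 t, ENNReal.ofReal (mu f u)
      = ∫⁻ u in Ioc 0 t, (ENNReal.ofReal (mu f u - c) + ENNReal.ofReal c) :=
        setLIntegral_congr_fun measurableSet_Ioc fun u hu ↦ by
          rw [← ENNReal.ofReal_add (sub_nonneg.mpr (hbelow u hu)) (mu_nonneg f t), sub_add_cancel]
    _ = (∫⁻ u in Ioc 0 t, ENNReal.ofReal (mu f u - c)) + ENNReal.ofReal c * ENNReal.ofReal t := by
        rw [lintegral_add_right _ measurable_const, setLIntegral_const, Real.volume_Ioc, sub_zero]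
    _ = ∫⁻ u, ENNReal.ofReal (mu f u - c) ∂mRes + ENNReal.ofReal c * ENNReal.ofReal t := by
        rw [mRes, ← Ioc_union_Ioi_eq_Ioi ht.le,
          lintegral_union measurableSet_Ioi (Ioc_disjoint_Ioi le_rfl), htail, add_zero]
    _ = _ := by rw [lintegral_ofReal_mu_sub hf hmf (mu_nonneg f t)]

lemma integral_Ioc_mu {f : ℝ → ℝ} (hf : RearrangementFinite f) (t : ℝ) :
    ∫ u in Ioc 0 t, mu f u = (∫⁻ u in Ioc 0 t, ENNReal.ofReal (mu f u)).toReal :=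
  integral_eq_lintegral_of_nonneg_ae (.of_forall (mu_nonneg f))
    (aemeasurable_restrict_of_antitoneOn measurableSet_Ioc
      ((mu_antitoneOn hf).mono Ioc_subset_Ioi_self)).aestronglyMeasurable

end Submajorization

open Submajorization

/-- If `T` is linear and contractive both on `L¹(0,∞)` and on `L^∞(0,∞)`, then for
every `f ∈ L¹ + L^∞`, `Tf` is submajorized by `f`:
`∫₀^t μ_s(Tf) ds ≤ ∫₀^t μ_s(f) ds` for all `t > 0`. -/
theorem submajorization_of_L1_Linfty_contraction
    (T : (ℝ → ℝ) →ₗ[ℝ] (ℝ → ℝ))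
    (hT1 : ∀ g : ℝ → ℝ, MemLp g 1 mRes →
      MemLp (T g) 1 mRes ∧ eLpNorm (T g) 1 mRes ≤ eLpNorm g 1 mRes)
    (hTinf : ∀ g : ℝ → ℝ, MemLp g ∞ mRes →
      MemLp (T g) ∞ mRes ∧ eLpNorm (T g) ∞ mRes ≤ eLpNorm g ∞ mRes)
    (f : ℝ → ℝ)
    (hsum : ∃ g h : ℝ → ℝ, f = g + h ∧ MemLp g 1 mRes ∧ MemLp h ∞ mRes)
    (t : ℝ) (ht : 0 < t) :
    ∫ s in Set.Ioc (0 : ℝ) t, mu (T f) s ≤ ∫ s in Set.Ioc (0 : ℝ) t, mu f s := by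
  obtain ⟨g, h, hfgh, hg, hh⟩ := hsum
  obtain ⟨e, he, hhe⟩ := exists_ae_abs_le_of_memLp_top hh
  have hf : RearrangementFinite f := hfgh ▸ (rearrangementFinite_of_memLp_one hg).add he hhe
  have hmf : AEMeasurable f mRes := hfgh ▸ hg.1.aemeasurable.add hh.1.aemeasurable
  set c := mu f t
  have hc : 0 ≤ c := mu_nonneg f t
  have hK := lintegral_Ioc_mu_eq hf hmf ht
  have hKfin : ∫⁻ u in Ioc 0 t, ENNReal.ofReal (mu f u) ≠ ∞ :=
    ne_top_of_le_ne_top (by finiteness) (hfgh ▸ lintegral_Ioc_mu_add_le hg he hhe t)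
  have hg' : MemLp (f - truncate c f) 1 mRes :=
    ⟨(hmf.sub (hmf.truncate c)).aestronglyMeasurable, (eLpNorm_sub_truncate_le hc f).trans_lt
      (lt_top_iff_ne_top.mpr (ne_top_of_le_ne_top hKfin (hK ▸ le_self_add)))⟩
  have hh' : ∀ᵐ x ∂mRes, |T (truncate c f) x| ≤ c := ae_abs_le_of_eLpNorm_top_le hc
    ((hTinf _ (memLp_top_truncate hmf hc)).2.trans (eLpNorm_top_truncate_le hc f))
  have hTf : T f = T (f - truncate c f) + T (truncate c f) := by rw [← map_add, sub_add_cancel]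
  have hTfin : RearrangementFinite (T f) :=
    hTf ▸ (rearrangementFinite_of_memLp_one (hT1 _ hg').1).add hc hh'
  rw [integral_Ioc_mu hTfin, integral_Ioc_mu hf]
  refine ENNReal.toReal_mono hKfin ?_
  calc ∫⁻ u in Ioc 0 t, ENNReal.ofReal (mu (T f) u)
      ≤ eLpNorm (T (f - truncate c f)) 1 mRes + ENNReal.ofReal c * ENNReal.ofReal t :=
        hTf ▸ lintegral_Ioc_mu_add_le (hT1 _ hg').1 hc hh' t
    _ ≤ eLpNorm (f - truncate c f) 1 mRes + ENNReal.ofReal c * ENNReal.ofReal t := by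
        gcongr; exact (hT1 _ hg').2
    _ ≤ ∫⁻ x, ENNReal.ofReal (|f x| - c) ∂mRes + ENNReal.ofReal c * ENNReal.ofReal t := by
        gcongr; exact eLpNorm_sub_truncate_le hc f
    _ = ∫⁻ u in Ioc 0 t, ENNReal.ofReal (mu f u) := hK.symm
end
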